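/- Let B be a nonzero element of su(2) ⊗ Λ^{2,+}(ℝ⁴)* and θ ∈ Λ¹(ℝ⁴)*. If B•θ = 0, then θ = 0. Here B•θ extends the bilinear contraction product α•β = (−1)^{p−1}Σᵢ(ι_{eᵢ}α)∧(ι_{eᵢ}β) by linearity, acting trivially on the su(2) factor. -/
import Mathlib


noncomputable section

/-- The space of 1-forms on `ℝ⁴` (i.e. `(ℝ⁴)*`, identified with `ℝ⁴` via the
standard inner product). -/
abbrev V4 : Type := Fin 4 → ℝ

/-- The exterior algebra `Λ(ℝ⁴)*`. -/
abbrev E4 : Type := ExteriorAlgebra ℝ V4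

/-- The basis 1-forms `e¹, e², e³, e⁴` (indexed here by `0,1,2,3`). -/
def e (i : Fin 4) : E4 := ExteriorAlgebra.ι ℝ (Pi.single i 1)

/-- Contraction (interior product) `ι_{eᵢ}` with the `i`-th standard basis vector of `ℝ⁴`,
realized as left contraction with the corresponding dual element. -/
def ctr (i : Fin 4) : E4 →ₗ[ℝ] E4 :=
  CliffordAlgebra.contractLeft (Q := (0 : QuadraticForm ℝ V4)) (LinearMap.proj i)

/-- The contraction product `α • β := (−1)^{p−1} Σᵢ (ι_{eᵢ}α) ∧ (ι_{eᵢ}β)`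
for a `p`-form `α`, as a bilinear map (`∧` is the exterior algebra product). -/
def dotP (p : ℕ) : E4 →ₗ[ℝ] E4 →ₗ[ℝ] E4 :=
  ((-1 : ℝ) ^ (p - 1)) • ∑ i : Fin 4, (LinearMap.mul ℝ E4).compl₁₂ (ctr i) (ctr i)

/-- The standard self-dual 2-forms `σ₁ = e¹∧e²+e³∧e⁴`, `σ₂ = e¹∧e³+e⁴∧e²`,
`σ₃ = e¹∧e⁴+e²∧e³`. -/
def σ : Fin 3 → E4 :=
  ![e 0 * e 1 + e 2 * e 3, e 0 * e 2 + e 3 * e 1, e 0 * e 3 + e 1 * e 2]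

open Matrix TensorProduct

/-- The real Lie algebra `su(2)`: traceless skew-Hermitian `2 × 2` complex matrices. -/
def su2 : Submodule ℝ (Matrix (Fin 2) (Fin 2) ℂ) where
  carrier := {A | Aᴴ = -A ∧ A.trace = 0}
  add_mem' := by
    rintro a b ⟨ha1, ha2⟩ ⟨hb1, hb2⟩
    refine ⟨?_, ?_⟩
    · rw [Matrix.conjTranspose_add, ha1, hb1, neg_add]
    · simp [Matrix.trace_add, ha2, hb2]
  zero_mem' := by simp
  smul_mem' := by
    rintro c a ⟨h1, h2⟩
    refine ⟨?_, ?_⟩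
    · simp [Matrix.conjTranspose_smul, h1]
    · simp [h2]

/-- The `2 × 2` complex matrices (ambient space of `su(2)`). -/
abbrev M2 : Type := Matrix (Fin 2) (Fin 2) ℂ

/-- The space `su(2) ⊗ Λ(ℝ⁴)*` is modeled inside `M2 ⊗ Λ(ℝ⁴)*`. -/
abbrev T2 : Type := M2 ⊗[ℝ] E4

/-- The contraction with a 1-form `θ`, `(ξ⊗α) • θ := ξ ⊗ (α•θ)` (with `p = 2`),
extended linearly to `M2 ⊗ Λ(ℝ⁴)*`. -/
def dotTheta (θ : V4) : T2 →ₗ[ℝ] T2 :=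
  TensorProduct.map LinearMap.id ((dotP 2).flip (ExteriorAlgebra.ι ℝ θ))

/-- The commutator bracket on matrices as an `ℝ`-bilinear map. -/
def brkt : M2 →ₗ[ℝ] M2 →ₗ[ℝ] M2 :=
  LinearMap.mul ℝ M2 - (LinearMap.mul ℝ M2).flip

/-- The bracket-contraction product `[ω₁ • ω₂]`, defined on simple tensors by
`[(ξ₁⊗α₁) • (ξ₂⊗α₂)] := ⁅ξ₁,ξ₂⁆ ⊗ (α₁•α₂)` (with `p = 2`) and extended bilinearly. -/
def brkDot : T2 →ₗ[ℝ] T2 →ₗ[ℝ] T2 :=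
  TensorProduct.map₂ brkt (dotP 2)

lemma ctr_ι (i : Fin 4) (v : V4) : ctr i (ExteriorAlgebra.ι ℝ v) = algebraMap ℝ E4 (v i) := by
  rw [ctr, ExteriorAlgebra.ι, CliffordAlgebra.contractLeft_ι]
  rfl

lemma ctr_e (i j : Fin 4) : ctr i (e j) = algebraMap ℝ E4 ((Pi.single j 1 : V4) i) := ctr_ι i _

lemma ctr_mul_e (i a b : Fin 4) :
    ctr i (e a * e b) = ((Pi.single a 1 : V4) i) • e b - ((Pi.single b 1 : V4) i) • e a := by
  rw [ctr, (by rfl : e a = ExteriorAlgebra.ι ℝ (Pi.single a 1)),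
    CliffordAlgebra.contractLeft_ι_mul, ← ctr, ctr_e]
  congr 1
  rw [← Algebra.commutes, ← Algebra.smul_def]

lemma dot2_mul (a b : Fin 4) (θ : V4) :
    dotP 2 (e a * e b) (ExteriorAlgebra.ι ℝ θ) = θ b • e a - θ a • e b := by
  simp only [dotP, LinearMap.smul_apply, LinearMap.sum_apply, LinearMap.compl₁₂_apply,
    LinearMap.mul_apply', ctr_mul_e, ctr_ι]
  simp only [sub_mul, smul_mul_assoc, ← Algebra.commutes, ← Algebra.smul_def, smul_smul,
    smul_sub, Finset.sum_sub_distrib, ← Finset.sum_smul, Pi.single_apply, mul_ite, mul_one,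
    mul_zero, Finset.sum_ite_eq, Finset.sum_ite_eq', Finset.mem_univ, if_true, pow_one,
    neg_smul, one_smul, neg_sub]
  norm_num
  module

def coeff (j : Fin 4) : E4 →ₗ[ℝ] ℝ :=
  (LinearMap.proj (R := ℝ) (φ := fun _ : Fin 4 => ℝ) j).comp ExteriorAlgebra.ιInv

lemma coeff_e (j k : Fin 4) : coeff j (e k) = (Pi.single k 1 : V4) j := by
  simp only [coeff, LinearMap.comp_apply, e, ExteriorAlgebra.ι_leftInverse _]
  rfl

def extj (j : Fin 4) : T2 →ₗ[ℝ] M2 :=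
  (TensorProduct.rid ℝ M2).toLinearMap ∘ₗ TensorProduct.map LinearMap.id (coeff j)

lemma extj_tmul (j : Fin 4) (m : M2) (x : E4) : extj j (m ⊗ₜ[ℝ] x) = coeff j x • m := by
  simp [extj]


/-- If `B` is a nonzero element of `su(2) ⊗ Λ^{2,+}(ℝ⁴)*` and `θ` a 1-form with
`B•θ = 0`, then `θ = 0`. -/
theorem stmt6 (ξ : Fin 3 → M2) (hξ : ∀ i, ξ i ∈ su2) (θ : V4)
    (hB : (∑ i, ξ i ⊗ₜ[ℝ] σ i : T2) ≠ 0)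
    (h : dotTheta θ (∑ i, ξ i ⊗ₜ[ℝ] σ i) = 0) :
    θ = 0 := by
  by_contra hθ
  have key : ∀ j : Fin 4, extj j (dotTheta θ (∑ i, ξ i ⊗ₜ[ℝ] σ i)) = 0 := by
    intro j; rw [h, LinearMap.map_zero]
  have expand : ∀ j : Fin 4, extj j (dotTheta θ (∑ i, ξ i ⊗ₜ[ℝ] σ i)) =
      (θ 1 * (Pi.single 0 1 : V4) j - θ 0 * (Pi.single 1 1 : V4) j
        + θ 3 * (Pi.single 2 1 : V4) j - θ 2 * (Pi.single 3 1 : V4) j) • ξ 0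
      + (θ 2 * (Pi.single 0 1 : V4) j - θ 0 * (Pi.single 2 1 : V4) j
        + θ 1 * (Pi.single 3 1 : V4) j - θ 3 * (Pi.single 1 1 : V4) j) • ξ 1
      + (θ 3 * (Pi.single 0 1 : V4) j - θ 0 * (Pi.single 3 1 : V4) j
        + θ 2 * (Pi.single 1 1 : V4) j - θ 1 * (Pi.single 2 1 : V4) j) • ξ 2 := by
    intro j
    rw [Fin.sum_univ_three]
    simp only [σ, Matrix.cons_val_zero, Matrix.cons_val_one, Matrix.head_cons,
      Matrix.head_fin_const, Matrix.cons_val_two, Matrix.tail_cons, dotTheta, map_add,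
      TensorProduct.map_tmul, LinearMap.id_coe, id_eq, LinearMap.flip_apply,
      LinearMap.map_add, dot2_mul, tmul_sub, tmul_smul, map_sub, LinearMap.map_smul, extj_tmul, coeff_e,
      smul_smul, smul_eq_mul]
    module
  have hm := fun j => (expand j).symm.trans (key j)
  have hm0 := hm 0; have hm1 := hm 1; have hm2 := hm 2; have hm3 := hm 3
  simp only [Pi.single_apply, if_true, if_false, Fin.isValue, mul_one, mul_zero,
    show ((0:Fin 4) = 0) = True by simp, show ((1:Fin 4) = 0) = False by simp,
    show ((2:Fin 4) = 0) = False by simp, show ((3:Fin 4) = 0) = False by simp,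
    show ((0:Fin 4) = 1) = False by simp, show ((1:Fin 4) = 1) = True by simp,
    show ((2:Fin 4) = 1) = False by simp, show ((3:Fin 4) = 1) = False by simp,
    show ((0:Fin 4) = 2) = False by simp, show ((1:Fin 4) = 2) = False by simp,
    show ((2:Fin 4) = 2) = True by simp, show ((3:Fin 4) = 2) = False by simp,
    show ((0:Fin 4) = 3) = False by simp, show ((1:Fin 4) = 3) = False by simp,
    show ((2:Fin 4) = 3) = False by simp, show ((3:Fin 4) = 3) = True by simp]
    at hm0 hm1 hm2 hm3
  set S : ℝ := θ 0 ^ 2 + θ 1 ^ 2 + θ 2 ^ 2 + θ 3 ^ 2 with hS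
  have hSne : S ≠ 0 := by
    obtain ⟨i, hi⟩ := Function.ne_iff.mp hθ
    have hi' : (0:ℝ) < θ i ^ 2 :=
      lt_of_le_of_ne (sq_nonneg _) (Ne.symm (pow_ne_zero 2 hi))
    have hcase : i = 0 ∨ i = 1 ∨ i = 2 ∨ i = 3 := by omega
    rcases hcase with rfl | rfl | rfl | rfl <;>
      nlinarith [sq_nonneg (θ 0), sq_nonneg (θ 1), sq_nonneg (θ 2), sq_nonneg (θ 3)]
  have M0 := hm0; have M1 := hm1; have M2' := hm2; have M3 := hm3
  have ha : ξ 0 = 0 := by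
    have H : S • ξ 0 =
        θ 1 • ((θ 1 - 0 + 0 - 0) • ξ 0 + (θ 2 - 0 + 0 - 0) • ξ 1 + (θ 3 - 0 + 0 - 0) • ξ 2)
      - θ 0 • ((0 - θ 0 + 0 - 0) • ξ 0 + (0 - 0 + 0 - θ 3) • ξ 1 + (0 - 0 + θ 2 - 0) • ξ 2)
      + θ 3 • ((0 - 0 + θ 3 - 0) • ξ 0 + (0 - θ 0 + 0 - 0) • ξ 1 + (0 - 0 + 0 - θ 1) • ξ 2)
      - θ 2 • ((0 - 0 + 0 - θ 2) • ξ 0 + (0 - 0 + θ 1 - 0) • ξ 1 + (0 - θ 0 + 0 - 0) • ξ 2) := by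
      rw [hS]; module
    rw [M0, M1, M2', M3] at H
    simp only [smul_zero, sub_zero, add_zero, zero_sub, neg_zero] at H
    exact (smul_eq_zero.mp H).resolve_left hSne
  have hb : ξ 1 = 0 := by
    have H : S • ξ 1 =
        θ 2 • ((θ 1 - 0 + 0 - 0) • ξ 0 + (θ 2 - 0 + 0 - 0) • ξ 1 + (θ 3 - 0 + 0 - 0) • ξ 2)
      - θ 3 • ((0 - θ 0 + 0 - 0) • ξ 0 + (0 - 0 + 0 - θ 3) • ξ 1 + (0 - 0 + θ 2 - 0) • ξ 2)
      - θ 0 • ((0 - 0 + θ 3 - 0) • ξ 0 + (0 - θ 0 + 0 - 0) • ξ 1 + (0 - 0 + 0 - θ 1) • ξ 2)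
      + θ 1 • ((0 - 0 + 0 - θ 2) • ξ 0 + (0 - 0 + θ 1 - 0) • ξ 1 + (0 - θ 0 + 0 - 0) • ξ 2) := by
      rw [hS]; module
    rw [M0, M1, M2', M3] at H
    simp only [smul_zero, sub_zero, add_zero, zero_sub, neg_zero] at H
    exact (smul_eq_zero.mp H).resolve_left hSne
  have hc : ξ 2 = 0 := by
    have H : S • ξ 2 =
        θ 3 • ((θ 1 - 0 + 0 - 0) • ξ 0 + (θ 2 - 0 + 0 - 0) • ξ 1 + (θ 3 - 0 + 0 - 0) • ξ 2)
      + θ 2 • ((0 - θ 0 + 0 - 0) • ξ 0 + (0 - 0 + 0 - θ 3) • ξ 1 + (0 - 0 + θ 2 - 0) • ξ 2)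
      - θ 1 • ((0 - 0 + θ 3 - 0) • ξ 0 + (0 - θ 0 + 0 - 0) • ξ 1 + (0 - 0 + 0 - θ 1) • ξ 2)
      - θ 0 • ((0 - 0 + 0 - θ 2) • ξ 0 + (0 - 0 + θ 1 - 0) • ξ 1 + (0 - θ 0 + 0 - 0) • ξ 2) := by
      rw [hS]; module
    rw [M0, M1, M2', M3] at H
    simp only [smul_zero, sub_zero, add_zero, zero_sub, neg_zero] at H
    exact (smul_eq_zero.mp H).resolve_left hSne
  apply hB
  rw [Fin.sum_univ_three, ha, hb, hc]
  simp


end
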